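/- arXiv:2309.03752 — 4 statements merged into one kernel-verified Lean document; each statement's English description precedes it below -/
import Mathlib

section
/- For m ∈ (0, K], m ≥ d*_α if and only if m ≥ α^n(1-p_d)^n g^{(n)}(m) for all n ∈ ℕ, i.e., the French-thinning threshold characterizes exactly the marks for which immediate removal dominates any deferred removal. -/
noncomputable def logisticGrowth (K lam : ℝ) (n : ℕ) (m : ℝ) : ℝ :=
  K / (1 + (K / m - 1) * Real.exp (-lam * n))

theorem stmt_6 (K lam α p : ℝ) (hK : 0 < K) (hlam : 0 < lam)
    (hα0 : 0 ≤ α) (hα1 : α < 1) (hp0 : 0 < p) (hp1 : p < 1)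
    (m : ℝ) (hm0 : 0 < m) (hmK : m ≤ K) :
    let γ := α * (1 - p)
    let d := max 0 (sSup {x : ℝ | ∃ n : ℕ, 1 ≤ n ∧
      x = K * (γ ^ n - Real.exp (-(n : ℝ) * lam)) / (1 - Real.exp (-(n : ℝ) * lam))})
    (d ≤ m ↔ ∀ n : ℕ, γ ^ n * logisticGrowth K lam n m ≤ m) := by
  intro γ d
  have hγ0 : 0 ≤ γ := mul_nonneg hα0 (by linarith)
  have hγ1 : γ < 1 := by
    show α * (1 - p) < 1
    nlinarith
  have hEfacts : ∀ n : ℕ, 1 ≤ n → Real.exp (-(n : ℝ) * lam) < 1 := by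
    intro n hn
    rw [Real.exp_lt_one_iff]
    have h1 : (1:ℝ) ≤ (n:ℝ) := by exact_mod_cast hn
    nlinarith
  have key : ∀ n : ℕ, 1 ≤ n →
      (γ ^ n * logisticGrowth K lam n m ≤ m ↔
        K * (γ ^ n - Real.exp (-(n : ℝ) * lam)) / (1 - Real.exp (-(n : ℝ) * lam)) ≤ m) := by
    intro n hn
    set E := Real.exp (-(n : ℝ) * lam) with hE
    have hE0 : 0 < E := Real.exp_pos _
    have hE1 : E < 1 := hEfacts n hn
    have hKm : 1 ≤ K / m := (one_le_div hm0).mpr hmK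
    have hD : 0 < 1 + (K / m - 1) * E := by nlinarith
    have hexp : Real.exp (-lam * (n : ℝ)) = E := by rw [hE]; ring_nf
    have hmd : m * (1 + (K / m - 1) * E) = m + (K - m) * E := by
      field_simp
    unfold logisticGrowth
    rw [hexp, ← mul_div_assoc, div_le_iff₀ hD, div_le_iff₀ (by linarith : (0:ℝ) < 1 - E), hmd]
    constructor <;> intro h <;> nlinarith
  have hγnle : ∀ n : ℕ, γ ^ n ≤ 1 := fun n => pow_le_one₀ hγ0 hγ1.le
  set S : Set ℝ := {x : ℝ | ∃ n : ℕ, 1 ≤ n ∧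
      x = K * (γ ^ n - Real.exp (-(n : ℝ) * lam)) / (1 - Real.exp (-(n : ℝ) * lam))} with hS
  have hSne : S.Nonempty := ⟨_, 1, le_refl 1, rfl⟩
  have hmem_le : ∀ x ∈ S, x ≤ K := by
    rintro x ⟨n, hn, rfl⟩
    have hE1 : Real.exp (-(n : ℝ) * lam) < 1 := hEfacts n hn
    rw [div_le_iff₀ (by linarith : (0:ℝ) < 1 - Real.exp (-(n : ℝ) * lam))]
    nlinarith [hγnle n, Real.exp_pos (-(n : ℝ) * lam)]
  have hSbdd : BddAbove S := ⟨K, hmem_le⟩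
  constructor
  · intro hd n
    rcases Nat.eq_zero_or_pos n with h0 | h1
    · subst h0
      have : logisticGrowth K lam 0 m = m := by
        unfold logisticGrowth
        norm_num
        field_simp
      simp [this]
    · exact (key n h1).mpr (le_trans (le_trans (le_csSup hSbdd ⟨n, h1, rfl⟩)
        (le_max_right _ _)) hd)
  · intro h
    refine max_le hm0.le (csSup_le hSne ?_)
    rintro x ⟨n, hn, rfl⟩
    exact (key n hn).mp (h n)
end

section
/- The infinite-horizon mark value satisfies the fixed-point equation s(m) = max{ m, α(1-p_d) s(g^{(1)}(m)) } for all m ∈ (0, K]. -/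
lemma lg_denom_pos {K lam m : ℝ} (hK : 0 < K) (hm0 : 0 < m) (hmK : m ≤ K) (n : ℕ) :
    0 < 1 + (K / m - 1) * Real.exp (-lam * n) := by
  have h1 : (1:ℝ) ≤ K / m := (one_le_div hm0).mpr hmK
  have h2 : (0:ℝ) ≤ (K / m - 1) * Real.exp (-lam * n) :=
    mul_nonneg (by linarith) (Real.exp_nonneg (-lam * n))
  linarith

lemma lg_pos {K lam m : ℝ} (hK : 0 < K) (hm0 : 0 < m) (hmK : m ≤ K) (n : ℕ) :
    0 < logisticGrowth K lam n m :=
  div_pos hK (lg_denom_pos hK hm0 hmK n)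

lemma lg_le {K lam m : ℝ} (hK : 0 < K) (hm0 : 0 < m) (hmK : m ≤ K) (n : ℕ) :
    logisticGrowth K lam n m ≤ K := by
  have h1 : (1:ℝ) ≤ K / m := (one_le_div hm0).mpr hmK
  have h2 : (1:ℝ) ≤ 1 + (K / m - 1) * Real.exp (-lam * n) := by
    have := mul_nonneg (by linarith : (0:ℝ) ≤ K / m - 1) (Real.exp_nonneg (-lam * n))
    linarith
  calc logisticGrowth K lam n m ≤ K / 1 := by
        unfold logisticGrowth
        exact div_le_div_of_nonneg_left hK.le one_pos h2
    _ = K := div_one K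

lemma lg_zero {K lam m : ℝ} (hK : 0 < K) (hm0 : 0 < m) :
    logisticGrowth K lam 0 m = m := by
  unfold logisticGrowth
  simp only [Nat.cast_zero, mul_zero, Real.exp_zero, mul_one]
  field_simp
  rw [show m + (K - m) = K by ring, div_self hK.ne']

lemma lg_comp {K lam m : ℝ} (hK : 0 < K) (hm0 : 0 < m) (hmK : m ≤ K) (n : ℕ) :
    logisticGrowth K lam n (logisticGrowth K lam 1 m)
      = logisticGrowth K lam (n + 1) m := by
  have hd := lg_denom_pos (lam := lam) hK hm0 hmK 1
  have hKdiv : K / logisticGrowth K lam 1 m - 1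
      = (K / m - 1) * Real.exp (-lam * 1) := by
    unfold logisticGrowth
    rw [div_div_eq_mul_div, mul_comm, mul_div_assoc, div_self hK.ne', mul_one]
    push_cast
    ring
  show K / (1 + (K / logisticGrowth K lam 1 m - 1) * Real.exp (-lam * n))
      = logisticGrowth K lam (n + 1) m
  rw [hKdiv]
  unfold logisticGrowth
  rw [mul_assoc, ← Real.exp_add]
  congr 3
  push_cast
  ring

lemma csup_nat_succ {f : ℕ → ℝ} (h : BddAbove (Set.range f)) :
    (⨆ n, f n) = max (f 0) (⨆ n, f (n + 1)) := by
  have h' : BddAbove (Set.range fun n => f (n + 1)) := by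
    obtain ⟨b, hb⟩ := h
    exact ⟨b, by rintro x ⟨n, rfl⟩; exact hb ⟨n + 1, rfl⟩⟩
  apply le_antisymm
  · refine ciSup_le fun n => ?_
    cases n with
    | zero => exact le_max_left _ _
    | succ k => exact le_trans (le_ciSup h' k) (le_max_right _ _)
  · exact max_le (le_ciSup h 0) (ciSup_le fun n => le_ciSup h (n + 1))

theorem stmt_9 (K lam α p : ℝ) (hK : 0 < K) (hlam : 0 < lam)
    (hα0 : 0 ≤ α) (hα1 : α < 1) (hp0 : 0 < p) (hp1 : p < 1)
    (m : ℝ) (hm0 : 0 < m) (hmK : m ≤ K) :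
    (⨆ n : ℕ, α ^ n * (1 - p) ^ n * logisticGrowth K lam n m) =
      max m (α * (1 - p) *
        ⨆ n : ℕ, α ^ n * (1 - p) ^ n *
          logisticGrowth K lam n (logisticGrowth K lam 1 m)) := by
  set c : ℝ := α * (1 - p) with hc
  have hc0 : 0 ≤ c := mul_nonneg hα0 (by linarith)
  have hc1 : c ≤ 1 := by
    have : α * (1 - p) ≤ 1 * 1 := mul_le_mul (by linarith) (by linarith) (by linarith) one_pos.le
    simpa using this
  have hg1_pos := lg_pos (lam := lam) hK hm0 hmK 1
  have hg1_le := lg_le (lam := lam) hK hm0 hmK 1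
  have key : ∀ n, α ^ n * (1 - p) ^ n = c ^ n := fun n => (mul_pow α (1 - p) n).symm
  have hbdd : ∀ (x : ℝ), 0 < x → x ≤ K →
      BddAbove (Set.range fun n : ℕ => c ^ n * logisticGrowth K lam n x) := by
    intro x hx0 hxK
    refine ⟨K, ?_⟩
    rintro y ⟨n, rfl⟩
    have h1 : c ^ n ≤ 1 := pow_le_one₀ hc0 hc1
    have h2 := lg_le (lam := lam) hK hx0 hxK n
    have h3 := (lg_pos (lam := lam) hK hx0 hxK n).le
    calc c ^ n * logisticGrowth K lam n x ≤ 1 * K :=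
          mul_le_mul h1 h2 h3 one_pos.le
      _ = K := one_mul K
  simp only [key]
  rw [csup_nat_succ (hbdd m hm0 hmK)]
  congr 1
  · simpa [pow_zero] using lg_zero (lam := lam) hK hm0
  · rw [Real.mul_iSup_of_nonneg hc0]
    congr 1
    funext n
    rw [lg_comp hK hm0 hmK]
    ring
end

section
/- The gap between upper and lower bound value functions satisfies hat_s(m) − tilde_s(x,m) ≤ αKβA(x)/(1 − α(1−p_d)) for all m ∈ (0, K]. -/
theorem stmt_15 (K lam α p β A : ℝ) (hK : 0 < K) (hlam : 0 < lam)
    (hα0 : 0 ≤ α) (hα1 : α < 1) (hp0 : 0 < p) (hp1 : p < 1)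
    (hβ : 0 ≤ β) (hA : 0 ≤ A)
    (m : ℝ) (hm0 : 0 < m) (hmK : m ≤ K) :
    (⨆ n : ℕ, α ^ n * (1 - p) ^ n * logisticGrowth K lam n m) -
      (⨆ n : ℕ, (α ^ n * (1 - p) ^ n * logisticGrowth K lam n m -
        α * K * β * A * ∑ i ∈ Finset.range n, α ^ i * (1 - p) ^ i)) ≤
      α * K * β * A / (1 - α * (1 - p)) := by
  set r := α * (1 - p) with hr
  have hr0 : 0 ≤ r := mul_nonneg hα0 (by linarith)
  have hr1 : r < 1 := by
    calc r ≤ α * 1 := mul_le_mul_of_nonneg_left (by linarith) hα0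
    _ = α := mul_one α
    _ < 1 := hα1
  have hc : 0 ≤ α * K * β * A := by positivity
  have hpow : ∀ n : ℕ, α ^ n * (1 - p) ^ n = r ^ n := by
    intro n; rw [hr, mul_pow]
  have hg0 : ∀ n : ℕ, 0 ≤ logisticGrowth K lam n m := by
    intro n
    have h1 : 0 ≤ K / m - 1 := by
      rw [sub_nonneg, le_div_iff₀ hm0, one_mul]; exact hmK
    have : (0:ℝ) < 1 + (K / m - 1) * Real.exp (-lam * n) := by positivity
    exact div_nonneg hK.le this.le
  have hgK : ∀ n : ℕ, logisticGrowth K lam n m ≤ K := by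
    intro n
    have h1 : 0 ≤ K / m - 1 := by
      rw [sub_nonneg, le_div_iff₀ hm0, one_mul]; exact hmK
    have h2 : (1:ℝ) ≤ 1 + (K / m - 1) * Real.exp (-lam * n) := by
      have := mul_nonneg h1 (Real.exp_pos (-lam * n)).le
      linarith
    calc logisticGrowth K lam n m ≤ K / 1 :=
          div_le_div_of_nonneg_left hK.le one_pos h2
      _ = K := div_one K
  have hfK : ∀ n : ℕ, α ^ n * (1 - p) ^ n * logisticGrowth K lam n m ≤ K := by
    intro n
    rw [hpow]
    calc r ^ n * logisticGrowth K lam n m ≤ 1 * K := by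
          apply mul_le_mul (pow_le_one₀ hr0 hr1.le) (hgK n) (hg0 n) zero_le_one
      _ = K := one_mul K
  have hbdd2 : BddAbove (Set.range fun n : ℕ => α ^ n * (1 - p) ^ n * logisticGrowth K lam n m -
      α * K * β * A * ∑ i ∈ Finset.range n, α ^ i * (1 - p) ^ i) := by
    refine ⟨K, ?_⟩
    rintro x ⟨n, rfl⟩
    dsimp only
    have hs : 0 ≤ ∑ i ∈ Finset.range n, α ^ i * (1 - p) ^ i := by
      apply Finset.sum_nonneg
      intro i _
      rw [hpow]; positivity
    have := hfK n
    nlinarith [mul_nonneg hc hs]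
  have hsum : ∀ n : ℕ, ∑ i ∈ Finset.range n, α ^ i * (1 - p) ^ i ≤ 1 / (1 - r) := by
    intro n
    have : ∑ i ∈ Finset.range n, α ^ i * (1 - p) ^ i = ∑ i ∈ Finset.range n, r ^ i := by
      exact Finset.sum_congr rfl fun i _ => hpow i
    rw [this, geom_sum_eq (by intro h; rw [h] at hr1; linarith : r ≠ 1)]
    have heq : (r ^ n - 1) / (r - 1) = (1 - r ^ n) / (1 - r) := by
      rw [← neg_div_neg_eq]; ring_nf
    rw [heq]
    have hrn : 0 ≤ r ^ n := pow_nonneg hr0 n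
    apply div_le_div_of_nonneg_right ?_ (by linarith)
    · linarith
  rw [sub_le_iff_le_add]
  apply ciSup_le
  intro n
  have h1 : α ^ n * (1 - p) ^ n * logisticGrowth K lam n m -
      α * K * β * A * ∑ i ∈ Finset.range n, α ^ i * (1 - p) ^ i ≤
      ⨆ n : ℕ, (α ^ n * (1 - p) ^ n * logisticGrowth K lam n m -
        α * K * β * A * ∑ i ∈ Finset.range n, α ^ i * (1 - p) ^ i) :=
    le_ciSup hbdd2 n
  have h2 : α * K * β * A * ∑ i ∈ Finset.range n, α ^ i * (1 - p) ^ i ≤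
      α * K * β * A / (1 - r) := by
    rw [div_eq_mul_one_div]
    exact mul_le_mul_of_nonneg_left (hsum n) hc
  linarith
end

section
/- If m ≥ d*_α then s(m) = m, and if m < d*_α then s(m) > m; that is, the French thinning threshold d*_α separates the marks whose optimal value equals the immediate reward from those whose optimal value strictly exceeds it. -/
lemma key_iff (K lam m β : ℝ) (hK : 0 < K) (hm0 : 0 < m) (hmK : m ≤ K)
    (hlam : 0 < lam) (n : ℕ) (hn : 1 ≤ n) :
    (β ^ n * logisticGrowth K lam n m ≤ m ↔
      K * (β ^ n - Real.exp (-(n : ℝ) * lam)) / (1 - Real.exp (-(n : ℝ) * lam)) ≤ m) := by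
  set E := Real.exp (-(n : ℝ) * lam) with hE
  have hE0 : 0 < E := Real.exp_pos _
  have hn1 : (1 : ℝ) ≤ (n : ℝ) := by exact_mod_cast hn
  have hE1 : E < 1 := by
    rw [hE]
    apply Real.exp_lt_one_iff.mpr
    nlinarith
  have hKm : 1 ≤ K / m := (one_le_div hm0).mpr hmK
  have hD : 0 < 1 + (K / m - 1) * E := by nlinarith
  have hExp : Real.exp (-lam * (n : ℝ)) = E := by rw [hE]; congr 1; ring
  unfold logisticGrowth
  rw [hExp]
  have h1 : β ^ n * (K / (1 + (K / m - 1) * E)) ≤ m ↔ β ^ n * K ≤ m * (1 + (K / m - 1) * E) := by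
    rw [← mul_div_assoc, div_le_iff₀ hD]
  have h2 : K * (β ^ n - E) / (1 - E) ≤ m ↔ K * (β ^ n - E) ≤ m * (1 - E) :=
    div_le_iff₀ (by linarith)
  rw [h1, h2]
  have hmD : m * (1 + (K / m - 1) * E) = m + (K - m) * E := by field_simp
  constructor <;> intro h <;> nlinarith

theorem stmt_19 (K lam α p : ℝ) (hK : 0 < K) (hlam : 0 < lam)
    (hα0 : 0 < α) (hα1 : α < 1) (hp0 : 0 < p) (hp1 : p < 1)
    (m : ℝ) (hm0 : 0 < m) (hmK : m ≤ K) :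
    let s : ℝ → ℝ := fun x => ⨆ n : ℕ, α ^ n * (1 - p) ^ n * logisticGrowth K lam n x
    let d := max 0 (sSup {x : ℝ | ∃ n : ℕ, 1 ≤ n ∧
      x = K * ((α * (1 - p)) ^ n - Real.exp (-(n : ℝ) * lam)) /
        (1 - Real.exp (-(n : ℝ) * lam))})
    (d ≤ m → s m = m) ∧ (m < d → m < s m) := by
  intro s d
  set β := α * (1 - p) with hβ
  have hβ0 : 0 < β := by apply mul_pos hα0; linarith
  have hβ1 : β < 1 := by nlinarith
  set S := {x : ℝ | ∃ n : ℕ, 1 ≤ n ∧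
      x = K * ((α * (1 - p)) ^ n - Real.exp (-(n : ℝ) * lam)) /
        (1 - Real.exp (-(n : ℝ) * lam))} with hS
  have hKm : 1 ≤ K / m := (one_le_div hm0).mpr hmK
  -- each term rewrite
  have hterm : ∀ n : ℕ, α ^ n * (1 - p) ^ n * logisticGrowth K lam n m
      = β ^ n * logisticGrowth K lam n m := by
    intro n; rw [hβ, mul_pow]
  -- S bounded above by K
  have hSbdd : BddAbove S := by
    refine ⟨K, ?_⟩
    rintro x ⟨n, hn, rfl⟩
    have hn1 : (1 : ℝ) ≤ (n : ℝ) := by exact_mod_cast hn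
    have hE0 : 0 < Real.exp (-(n : ℝ) * lam) := Real.exp_pos _
    have hE1 : Real.exp (-(n : ℝ) * lam) < 1 := by
      apply Real.exp_lt_one_iff.mpr; nlinarith
    have hβn : (α * (1 - p)) ^ n ≤ 1 := by
      apply pow_le_one₀ (by positivity) (by nlinarith)
    rw [div_le_iff₀ (by linarith)]
    nlinarith
  have hSne : S.Nonempty := ⟨_, 1, le_refl 1, rfl⟩
  -- term bounds
  have hDpos : ∀ n : ℕ, 0 < 1 + (K / m - 1) * Real.exp (-lam * (n : ℝ)) := by
    intro n
    have := Real.exp_pos (-lam * (n : ℝ))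
    nlinarith [Real.exp_pos (-lam * (n : ℝ))]
  have hfK : ∀ n : ℕ, α ^ n * (1 - p) ^ n * logisticGrowth K lam n m ≤ K := by
    intro n
    rw [hterm]
    have hβn : β ^ n ≤ 1 := pow_le_one₀ hβ0.le hβ1.le
    have hβnn : 0 < β ^ n := pow_pos hβ0 n
    unfold logisticGrowth
    have hD := hDpos n
    have hE0 : 0 < Real.exp (-lam * (n : ℝ)) := Real.exp_pos _
    have hE1 : Real.exp (-lam * (n : ℝ)) ≤ 1 := by
      apply Real.exp_le_one_iff.mpr
      have : (0:ℝ) ≤ (n:ℝ) := Nat.cast_nonneg n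
      nlinarith
    have h1D : 1 ≤ 1 + (K / m - 1) * Real.exp (-lam * (n : ℝ)) := by nlinarith
    have hgK : K / (1 + (K / m - 1) * Real.exp (-lam * (n : ℝ))) ≤ K :=
      div_le_self hK.le h1D
    have hg0 : 0 ≤ K / (1 + (K / m - 1) * Real.exp (-lam * (n : ℝ))) := by positivity
    nlinarith
  have hrange : BddAbove (Set.range fun n : ℕ =>
      α ^ n * (1 - p) ^ n * logisticGrowth K lam n m) := by
    refine ⟨K, ?_⟩
    rintro x ⟨n, rfl⟩
    exact hfK n
  have hf0 : α ^ 0 * (1 - p) ^ 0 * logisticGrowth K lam 0 m = m := by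
    unfold logisticGrowth
    simp only [pow_zero, one_mul, Nat.cast_zero, mul_zero, Real.exp_zero, mul_one]
    field_simp
    rw [show m + (K - m) = K by ring, div_self hK.ne']
  constructor
  · intro hdm
    have hSup : sSup S ≤ m := le_trans (le_trans (le_max_right _ _) hdm) (le_refl m)
    apply le_antisymm
    · apply ciSup_le
      intro n
      rcases Nat.eq_zero_or_pos n with h0 | hpos
      · rw [h0, hf0]
      · rw [hterm]
        apply (key_iff K lam m β hK hm0 hmK hlam n hpos).mpr
        refine le_trans (le_csSup hSbdd ?_) hSup
        exact ⟨n, hpos, by rw [hβ]⟩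
    · calc m = α ^ 0 * (1 - p) ^ 0 * logisticGrowth K lam 0 m := hf0.symm
        _ ≤ _ := le_ciSup hrange 0
  · intro hmd
    have hmS : m < sSup S := by
      rcases lt_max_iff.mp hmd with h | h
      · linarith
      · exact h
    obtain ⟨x, ⟨n, hn, rfl⟩, hx⟩ := exists_lt_of_lt_csSup hSne hmS
    have hkey : m < β ^ n * logisticGrowth K lam n m := by
      by_contra h
      push_neg at h
      have := (key_iff K lam m β hK hm0 hmK hlam n hn).mp h
      rw [hβ] at this
      linarith
    calc m < β ^ n * logisticGrowth K lam n m := hkey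
      _ = α ^ n * (1 - p) ^ n * logisticGrowth K lam n m := (hterm n).symm
      _ ≤ _ := le_ciSup hrange n
end
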